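/- arXiv:1512.08879 — 3 statements merged into one kernel-verified Lean document; each statement's English description precedes it below -/
import Mathlib

section
/- Fix t > 0 with t ≠ 2 and x ∈ ℝ, and let g_n = (c_n x + d_n)^{1/t} for n large enough that c_n x + d_n > 0. Then as n → ∞, φ(g_n)/g_n = n^{−1} e^{−x} ( 1 + x b_n^{−2} ((t−2)x/2 − 1) + x² b_n^{−4} ( (t+1)/2 − ((t−2)(2t+1)/6) x + ((t−2)²/8) x² ) + O(b_n^{−6}) ), i.e. there exist C > 0 and N such that for all n ≥ N the difference between n e^{x} φ(g_n)/g_n and the bracketed expression is at most C b_n^{−6} in absolute value. -/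
open Real Filter Topology Asymptotics

/-- The standard normal density. -/
noncomputable def stdNormalPDF (x : ℝ) : ℝ :=
  Real.exp (-x ^ 2 / 2) / Real.sqrt (2 * Real.pi)


lemma logTaylor3 : (fun v : ℝ => Real.log (1+v) - (v - v^2/2 + v^3/3)) =O[𝓝 0] (fun v => v^4) := by
  apply IsBigO.of_bound 2
  have h : ∀ᶠ v : ℝ in 𝓝 0, |v| < 1/2 := by
    have := Metric.ball_mem_nhds (0:ℝ) (by norm_num : (0:ℝ) < 1/2)
    filter_upwards [this] with v hv
    simpa [Real.dist_eq] using hv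
  filter_upwards [h] with v hv
  have h1 : |(-v : ℝ)| < 1 := by rw [abs_neg]; linarith [hv]
  have key := Real.abs_log_sub_add_sum_range_le h1 3
  simp only [Finset.sum_range_succ, Finset.sum_range_zero] at key
  norm_num at key
  have e2 : Real.log (1+v) - (v - v^2/2 + v^3/3) = -v + v^2/2 + (-v)^3/3 + Real.log (1+v) := by
    ring
  rw [Real.norm_eq_abs, Real.norm_eq_abs, e2]
  have h3 : |v|^4/(1-|v|) ≤ 2 * |v^4| := by
    rw [div_le_iff₀ (by linarith [abs_nonneg v])]
    have h4 : |v|^4 = |v^4| := by rw [abs_pow]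
    nlinarith [abs_nonneg v, pow_nonneg (abs_nonneg v) 4, abs_nonneg (v^4)]
  linarith [key]


lemma evAbsLe1 : ∀ᶠ y : ℝ in 𝓝 0, |y| ≤ 1 := by
  have := Metric.ball_mem_nhds (0:ℝ) (by norm_num : (0:ℝ) < 1)
  filter_upwards [this] with y hy
  simp only [Real.dist_eq, Metric.mem_ball, sub_zero] at hy
  linarith

lemma expTaylor1 : (fun y : ℝ => Real.exp y - 1) =O[𝓝 0] (fun y => y) := by
  apply IsBigO.of_bound 2
  filter_upwards [evAbsLe1] with y hy
  have key := Real.exp_bound hy (n := 1) (by norm_num)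
  simp only [Finset.sum_range_succ, Finset.sum_range_zero] at key
  norm_num [Nat.factorial] at key
  rw [Real.norm_eq_abs, Real.norm_eq_abs]
  calc |Real.exp y - 1| ≤ |y| * 2 := key
    _ = 2 * |y| := by ring

lemma expTaylor3 : (fun y : ℝ => Real.exp y - (1 + y + y^2/2)) =O[𝓝 0] (fun y => y^3) := by
  apply IsBigO.of_bound 1
  filter_upwards [evAbsLe1] with y hy
  have key := Real.exp_bound hy (n := 3) (by norm_num)
  simp only [Finset.sum_range_succ, Finset.sum_range_zero] at key
  norm_num [Nat.factorial] at key
  rw [Real.norm_eq_abs, Real.norm_eq_abs, abs_pow] at *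
  nlinarith [pow_nonneg (abs_nonneg y) 3, abs_nonneg (Real.exp y - (1+y+y^2/2))]

lemma expTaylor4 : (fun y : ℝ => Real.exp y - (1 + y + y^2/2 + y^3/6)) =O[𝓝 0] (fun y => y^4) := by
  apply IsBigO.of_bound 1
  filter_upwards [evAbsLe1] with y hy
  have key := Real.exp_bound hy (n := 4) (by norm_num)
  simp only [Finset.sum_range_succ, Finset.sum_range_zero] at key
  norm_num [Nat.factorial] at key
  rw [Real.norm_eq_abs, Real.norm_eq_abs, abs_pow] at *
  nlinarith [pow_nonneg (abs_nonneg y) 4, abs_nonneg (Real.exp y - (1+y+y^2/2+y^3/6))]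


lemma mulpow_bigO {p : ℝ → ℝ} (hp : Continuous p) (k : ℕ) :
    (fun v : ℝ => v^k * p v) =O[𝓝 0] (fun v => v^k) := by
  have h1 := (hp.tendsto 0).isBigO_one ℝ
  have := (isBigO_refl (fun v : ℝ => v^k) (𝓝 0)).mul h1
  simpa using this

lemma tendsto_pow_zero (k : ℕ) (hk : 0 < k) : Tendsto (fun v : ℝ => v^k) (𝓝 0) (𝓝 0) := by
  have := (continuous_pow k (M := ℝ)).tendsto 0
  simpa [zero_pow hk.ne'] using this

lemma rpowTaylor (α : ℝ) :
    (fun v : ℝ => (1+v) ^ α - (1 + α*v + α*(α-1)/2*v^2 + α*(α-1)*(α-2)/6*v^3))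
      =O[𝓝 0] (fun v => v^4) := by
  set w : ℝ → ℝ := fun v => α*(v - v^2/2 + v^3/3) with hw
  have hwc : Continuous w := by fun_prop
  have hw0 : Tendsto w (𝓝 0) (𝓝 0) := by
    have := hwc.tendsto 0; simpa [hw] using this
  have hD : (fun v : ℝ => α * Real.log (1+v) - w v) =O[𝓝 0] (fun v => v^4) := by
    have := logTaylor3.const_mul_left α
    simp only [hw, mul_sub] at this ⊢
    exact this
  have hD0 : Tendsto (fun v : ℝ => α * Real.log (1+v) - w v) (𝓝 0) (𝓝 0) :=
    hD.trans_tendsto (tendsto_pow_zero 4 (by norm_num))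
  -- Term 1
  have T1 : (fun v : ℝ => Real.exp (α * Real.log (1+v)) - Real.exp (w v)) =O[𝓝 0]
      (fun v => v^4) := by
    have h1 : (fun v : ℝ => Real.exp (w v)) =O[𝓝 0] (fun _ => (1:ℝ)) :=
      ((Real.continuous_exp.tendsto (0:ℝ)).comp hw0).isBigO_one ℝ
    have h2 : (fun v : ℝ => Real.exp (α * Real.log (1+v) - w v) - 1) =O[𝓝 0]
        (fun v => v^4) := (expTaylor1.comp_tendsto hD0).trans hD
    have h3 := h1.mul h2
    have h4 : (fun v : ℝ => Real.exp (w v) * (Real.exp (α * Real.log (1+v) - w v) - 1))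
        = fun v : ℝ => Real.exp (α * Real.log (1+v)) - Real.exp (w v) := by
      funext v
      rw [mul_sub, mul_one, ← Real.exp_add]
      ring_nf
    rw [h4] at h3
    simpa using h3
  -- Term 2
  have T2 : (fun v : ℝ => Real.exp (w v) - (1 + w v + (w v)^2/2 + (w v)^3/6)) =O[𝓝 0]
      (fun v => v^4) := by
    refine (expTaylor4.comp_tendsto hw0).trans ?_
    have hq : Continuous (fun v : ℝ => (α*(1 - v/2 + v^2/3))^4) := by fun_prop
    have := mulpow_bigO hq 4
    have heq : ((fun y : ℝ => y^4) ∘ w) = fun v : ℝ => v^4 * (α*(1 - v/2 + v^2/3))^4 := by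
      funext v; simp only [Function.comp, hw]; ring
    rw [heq]; exact this
  -- Term 3
  have T3 : (fun v : ℝ => (1 + w v + (w v)^2/2 + (w v)^3/6)
      - (1 + α*v + α*(α-1)/2*v^2 + α*(α-1)*(α-2)/6*v^3)) =O[𝓝 0] (fun v => v^4) := by
    have hq : Continuous (fun v : ℝ =>
        α^2*(11/24 - v/6 + v^2/18) + α^3*(-1/4 + 7*v/24 - 3*v^2/16 + 7*v^3/72 - v^4/36 + v^5/162)) := by
      fun_prop
    have := mulpow_bigO hq 4
    have heq : (fun v : ℝ => (1 + w v + (w v)^2/2 + (w v)^3/6)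
        - (1 + α*v + α*(α-1)/2*v^2 + α*(α-1)*(α-2)/6*v^3))
        = fun v : ℝ => v^4 * (α^2*(11/24 - v/6 + v^2/18)
          + α^3*(-1/4 + 7*v/24 - 3*v^2/16 + 7*v^3/72 - v^4/36 + v^5/162)) := by
      funext v; simp only [hw]; ring
    rw [heq]; exact this
  have hsum := (T1.add T2).add T3
  refine hsum.congr' ?_ EventuallyEq.rfl
  have h : ∀ᶠ v : ℝ in 𝓝 0, |v| < 1 := by
    have := Metric.ball_mem_nhds (0:ℝ) (by norm_num : (0:ℝ) < 1)
    filter_upwards [this] with v hv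
    simpa [Real.dist_eq] using hv
  filter_upwards [h] with v hv
  have hpos : (0:ℝ) < 1 + v := by cases abs_lt.mp hv; linarith
  rw [Real.rpow_def_of_pos hpos, mul_comm (Real.log (1+v)) α]
  ring


notation "l₀" => nhdsWithin (0:ℝ) (Set.Ioi 0)

lemma ev_pos : ∀ᶠ s : ℝ in l₀, 0 < s := self_mem_nhdsWithin

lemma mulpow_bigO' {p : ℝ → ℝ} (hp : Continuous p) (k : ℕ) :
    (fun v : ℝ => v^k * p v) =O[l₀] (fun v => v^k) :=
  (mulpow_bigO hp k).mono nhdsWithin_le_nhds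

lemma tendsto_pow_zero' (k : ℕ) (hk : 0 < k) : Tendsto (fun v : ℝ => v^k) l₀ (𝓝 0) :=
  (tendsto_pow_zero k hk).mono_left nhdsWithin_le_nhds

lemma pow_succ_bigO (k : ℕ) : (fun s : ℝ => s^(k+1)) =O[l₀] (fun s => s^k) := by
  apply IsBigO.of_bound 1
  have h1 : ∀ᶠ s : ℝ in l₀, |s| < 1 := by
    apply Filter.Eventually.filter_mono nhdsWithin_le_nhds
    have := Metric.ball_mem_nhds (0:ℝ) (by norm_num : (0:ℝ) < 1)
    filter_upwards [this] with s hs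
    simpa [Real.dist_eq] using hs
  filter_upwards [h1] with s hs
  rw [Real.norm_eq_abs, Real.norm_eq_abs, one_mul, abs_pow, abs_pow, pow_succ]
  nlinarith [pow_nonneg (abs_nonneg s) k, abs_nonneg s]

lemma div2s {f : ℝ → ℝ} {k : ℕ} (h : f =O[l₀] fun s => s^(k+1)) :
    (fun s => f s / (2*s)) =O[l₀] fun s => s^k := by
  obtain ⟨C, hC⟩ := h.bound
  apply IsBigO.of_bound (C/2)
  filter_upwards [hC, ev_pos] with s h1 h2
  rw [Real.norm_eq_abs, Real.norm_eq_abs, abs_div, abs_pow]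
  rw [Real.norm_eq_abs, Real.norm_eq_abs, abs_pow] at h1
  rw [abs_of_pos h2] at *
  rw [abs_of_pos (by linarith : (0:ℝ) < 2*s)]
  rw [div_le_iff₀ (by linarith : (0:ℝ) < 2*s)]
  calc |f s| ≤ C * s^(k+1) := h1
    _ = C/2 * s^k * (2*s) := by ring

lemma comp_txs (t x : ℝ) {f : ℝ → ℝ} {k : ℕ} (h : f =O[𝓝 0] fun v => v^k) :
    (fun s : ℝ => f (t*x*s)) =O[l₀] fun s => s^k := by
  have htend : Tendsto (fun s : ℝ => t*x*s) l₀ (𝓝 0) := by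
    have : Tendsto (fun s : ℝ => t*x*s) (𝓝 0) (𝓝 (t*x*0)) :=
      (continuous_const.mul continuous_id).tendsto 0
    rw [mul_zero] at this
    exact this.mono_left nhdsWithin_le_nhds
  have h2 := h.comp_tendsto htend
  refine h2.trans ?_
  rw [show ((fun v : ℝ => v^k) ∘ fun s : ℝ => t*x*s) = fun s : ℝ => (t*x)^k * s^k from by
    funext s; simp [Function.comp]; ring]
  exact (isBigO_refl (fun s : ℝ => s^k) l₀).const_mul_left _

lemma keyExpansion (t x : ℝ) (ht : 0 < t) :
    (fun s : ℝ => (1 + t*x*s) ^ (-(1/t)) * Real.exp (x + (1 - (1 + t*x*s) ^ (2/t)) / (2*s))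
      - (1 + x*s*((t-2)*x/2 - 1)
        + x^2*s^2*((t+1)/2 - (t-2)*(2*t+1)/6*x + (t-2)^2/8*x^2)))
      =O[l₀] (fun s => s^3) := by
  obtain ⟨a₂, ha2⟩ : ∃ a : ℝ, a = (2/t)*(2/t-1)/2*(t*x)^2 := ⟨_, rfl⟩
  obtain ⟨a₃, ha3⟩ : ∃ a : ℝ, a = (2/t)*(2/t-1)*(2/t-2)/6*(t*x)^3 := ⟨_, rfl⟩
  obtain ⟨β₁, hb1⟩ : ∃ a : ℝ, a = (-(1/t))*(t*x) := ⟨_, rfl⟩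
  obtain ⟨β₂, hb2⟩ : ∃ a : ℝ, a = (-(1/t))*((-(1/t))-1)/2*(t*x)^2 := ⟨_, rfl⟩
  obtain ⟨β₃, hb3⟩ : ∃ a : ℝ, a = (-(1/t))*((-(1/t))-1)*((-(1/t))-2)/6*(t*x)^3 := ⟨_, rfl⟩
  obtain ⟨q₁, hq1⟩ : ∃ a : ℝ, a = -a₂/2 := ⟨_, rfl⟩
  obtain ⟨q₂, hq2⟩ : ∃ a : ℝ, a = -a₃/2 := ⟨_, rfl⟩
  obtain ⟨ρ₂, hr2⟩ : ∃ a : ℝ, a = q₂ + q₁^2/2 := ⟨_, rfl⟩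
  set G : ℝ → ℝ := fun s => (1 + t*x*s) ^ (2/t) with hG
  set W : ℝ → ℝ := fun s => (1 + t*x*s) ^ (-(1/t)) with hWdef
  have hGexp : (fun s => G s - (1 + (2/t)*(t*x)*s + a₂*s^2 + a₃*s^3)) =O[l₀]
      (fun s => s^4) := by
    have h0 := comp_txs t x (rpowTaylor (2/t))
    refine h0.congr_left fun s => ?_
    simp only [hG, ha2, ha3]; ring
  have hyq : (fun s => (x + (1 - G s) / (2*s)) - (q₁*s + q₂*s^2)) =O[l₀]
      (fun s => s^3) := by
    have h := div2s hGexp.neg_left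
    refine h.congr' ?_ EventuallyEq.rfl
    filter_upwards [ev_pos] with s hs
    rw [hq1, hq2]
    field_simp
    ring
  have hyq0 : Tendsto (fun s => (x + (1 - G s) / (2*s)) - (q₁*s + q₂*s^2)) l₀ (𝓝 0) :=
    hyq.trans_tendsto (tendsto_pow_zero' 3 (by norm_num))
  have hq0 : Tendsto (fun s : ℝ => q₁*s + q₂*s^2) l₀ (𝓝 0) := by
    have h0 : Tendsto (fun s : ℝ => q₁*s + q₂*s^2) (𝓝 0) (𝓝 (q₁*0 + q₂*0^2)) := by
      apply Continuous.tendsto; fun_prop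
    norm_num at h0
    exact h0.mono_left nhdsWithin_le_nhds
  have hE1 : (fun s => Real.exp (x + (1 - G s) / (2*s)) - Real.exp (q₁*s + q₂*s^2))
      =O[l₀] (fun s => s^3) := by
    have h1 : (fun s : ℝ => Real.exp (q₁*s + q₂*s^2)) =O[l₀] (fun _ => (1:ℝ)) :=
      ((Real.continuous_exp.tendsto (0:ℝ)).comp hq0).isBigO_one ℝ
    have h2 : (fun s => Real.exp ((x + (1 - G s) / (2*s)) - (q₁*s + q₂*s^2)) - 1)
        =O[l₀] (fun s => s^3) := (expTaylor1.comp_tendsto hyq0).trans hyq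
    have h3 := h1.mul h2
    have h4 : (fun s => Real.exp (q₁*s + q₂*s^2) *
          (Real.exp ((x + (1 - G s) / (2*s)) - (q₁*s + q₂*s^2)) - 1))
        = fun s => Real.exp (x + (1 - G s) / (2*s)) - Real.exp (q₁*s + q₂*s^2) := by
      funext s; rw [mul_sub, mul_one, ← Real.exp_add]; ring_nf
    rw [h4] at h3
    simpa using h3
  have hE2 : (fun s => Real.exp (q₁*s + q₂*s^2)
      - (1 + (q₁*s + q₂*s^2) + (q₁*s + q₂*s^2)^2/2)) =O[l₀] (fun s => s^3) := by
    refine (expTaylor3.comp_tendsto hq0).trans ?_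
    have hqc : Continuous (fun s : ℝ => (q₁ + q₂*s)^3) := by fun_prop
    have h0 := mulpow_bigO' hqc 3
    refine IsBigO.trans ?_ h0
    rw [show ((fun y : ℝ => y^3) ∘ fun s : ℝ => q₁*s + q₂*s^2)
        = fun s : ℝ => s^3 * (q₁ + q₂*s)^3 from by
      funext s; simp [Function.comp]; ring]
    exact isBigO_refl _ _
  have hE3 : (fun s => (1 + (q₁*s + q₂*s^2) + (q₁*s + q₂*s^2)^2/2)
      - (1 + q₁*s + ρ₂*s^2)) =O[l₀] (fun s => s^3) := by
    have hqc : Continuous (fun s : ℝ => q₁*q₂ + q₂^2/2*s) := by fun_prop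
    refine (mulpow_bigO' hqc 3).congr_left fun s => ?_
    rw [hr2]; ring
  have hE : (fun s => Real.exp (x + (1 - G s) / (2*s)) - (1 + q₁*s + ρ₂*s^2))
      =O[l₀] (fun s => s^3) := by
    have h0 := (hE1.add hE2).add hE3
    exact h0.congr_left fun s => by ring
  have hWS : (fun s => W s - (1 + β₁*s + β₂*s^2 + β₃*s^3)) =O[l₀] (fun s => s^3) := by
    have h0 := comp_txs t x (rpowTaylor (-(1/t)))
    have h4 : (fun s => W s - (1 + β₁*s + β₂*s^2 + β₃*s^3)) =O[l₀] (fun s => s^4) := by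
      refine h0.congr_left fun s => ?_
      simp only [hWdef, hb1, hb2, hb3]; ring
    exact h4.trans (pow_succ_bigO 3)
  have hSb : (fun s : ℝ => 1 + β₁*s + β₂*s^2 + β₃*s^3) =O[l₀] (fun _ => (1:ℝ)) := by
    have h0 : Tendsto (fun s : ℝ => 1 + β₁*s + β₂*s^2 + β₃*s^3) (𝓝 0)
        (𝓝 (1 + β₁*0 + β₂*0^2 + β₃*0^3)) := by apply Continuous.tendsto; fun_prop
    exact (h0.mono_left nhdsWithin_le_nhds).isBigO_one ℝ
  have hRb : (fun s : ℝ => 1 + q₁*s + ρ₂*s^2) =O[l₀] (fun _ => (1:ℝ)) := by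
    have h0 : Tendsto (fun s : ℝ => 1 + q₁*s + ρ₂*s^2) (𝓝 0)
        (𝓝 (1 + q₁*0 + ρ₂*0^2)) := by apply Continuous.tendsto; fun_prop
    exact (h0.mono_left nhdsWithin_le_nhds).isBigO_one ℝ
  have hs3one : (fun s : ℝ => s^3) =O[l₀] (fun _ => (1:ℝ)) :=
    (tendsto_pow_zero' 3 (by norm_num)).isBigO_one ℝ
  have hWb : W =O[l₀] (fun _ => (1:ℝ)) := by
    have h0 := hSb.add (hWS.trans hs3one)
    exact h0.congr_left fun s => by ring
  have hP1 : (fun s => W s * Real.exp (x + (1 - G s) / (2*s))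
      - (1 + β₁*s + β₂*s^2 + β₃*s^3) * (1 + q₁*s + ρ₂*s^2)) =O[l₀] (fun s => s^3) := by
    have h1 := (hWb.mul hE).congr_right fun s => (one_mul _)
    have h2 := (hWS.mul hRb).congr_right fun s => (mul_one _)
    exact (h1.add h2).congr_left fun s => by ring
  have hc1 : β₁ + q₁ = x*((t-2)*x/2 - 1) := by
    rw [hb1, hq1, ha2]; field_simp; ring
  have hc2 : β₂ + β₁*q₁ + ρ₂ = x^2*((t+1)/2 - (t-2)*(2*t+1)/6*x + (t-2)^2/8*x^2) := by
    rw [hb2, hr2, hq2, hb1, hq1, ha3, ha2]; field_simp; ring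
  have hP2 : (fun s => (1 + β₁*s + β₂*s^2 + β₃*s^3) * (1 + q₁*s + ρ₂*s^2)
      - (1 + x*s*((t-2)*x/2 - 1)
        + x^2*s^2*((t+1)/2 - (t-2)*(2*t+1)/6*x + (t-2)^2/8*x^2))) =O[l₀]
      (fun s => s^3) := by
    have hqc : Continuous (fun s : ℝ =>
        (β₃ + β₂*q₁ + β₁*ρ₂) + (β₃*q₁ + β₂*ρ₂)*s + β₃*ρ₂*s^2) := by fun_prop
    refine (mulpow_bigO' hqc 3).congr_left fun s => ?_
    linear_combination (-s) * hc1 + (-(s^2)) * hc2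
  have hfin : (fun s => W s * Real.exp (x + (1 - G s) / (2*s))
      - (1 + x*s*((t-2)*x/2 - 1)
        + x^2*s^2*((t+1)/2 - (t-2)*(2*t+1)/6*x + (t-2)^2/8*x^2))) =O[l₀]
      (fun s => s^3) := (hP1.add hP2).congr_left fun s => by ring
  exact hfin




/-- With `b_n` the unique positive solution of `2π b_n² exp(b_n²) = n²`,
`c_n = t b_n^{t−2}`, `d_n = b_n^t` (for `t > 0`, `t ≠ 2`) and `g_n = (c_n x + d_n)^{1/t}`:
`φ(g_n)/g_n = n⁻¹ e^{−x} (1 + x b_n^{−2}((t−2)x/2 − 1)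
  + x² b_n^{−4}((t+1)/2 − ((t−2)(2t+1)/6)x + ((t−2)²/8)x²) + O(b_n^{−6}))`. -/
theorem powered_extremes_density_ratio_expansion
    (b : ℕ → ℝ)
    (hb : ∀ n : ℕ, 1 ≤ n → 0 < b n ∧
      2 * Real.pi * (b n) ^ 2 * Real.exp ((b n) ^ 2) = (n : ℝ) ^ 2)
    (t : ℝ) (ht : 0 < t) (ht2 : t ≠ 2) (x : ℝ)
    (c d g : ℕ → ℝ)
    (hc : ∀ n : ℕ, c n = t * b n ^ (t - 2))
    (hd : ∀ n : ℕ, d n = b n ^ t)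
    (hg : ∀ n : ℕ, g n = (c n * x + d n) ^ (1 / t)) :
    ∃ C > (0 : ℝ), ∃ N : ℕ, ∀ n : ℕ, N ≤ n →
      0 < c n * x + d n ∧
      |(n : ℝ) * Real.exp x * (stdNormalPDF (g n) / g n) -
        (1 + x / (b n) ^ 2 * ((t - 2) * x / 2 - 1) +
          x ^ 2 / (b n) ^ 4 *
            ((t + 1) / 2 - (t - 2) * (2 * t + 1) / 6 * x + (t - 2) ^ 2 / 8 * x ^ 2))|
      ≤ C / (b n) ^ 6 := by
  obtain ⟨C, hC⟩ := (keyExpansion t x ht).bound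
  rw [eventually_nhdsWithin_iff, Metric.eventually_nhds_iff] at hC
  obtain ⟨ε, hε, hball⟩ := hC
  set δ : ℝ := min ε (1/(|t*x|+1)) with hδdef
  have hδ : 0 < δ := lt_min hε (by positivity)
  -- choose N so that b n is large
  have hblarge : ∃ N : ℕ, ∀ n, N ≤ n → 1 ≤ n ∧ max 1 (Real.sqrt (1/δ)) < b n := by
    set M : ℝ := max 1 (Real.sqrt (1/δ)) with hM
    have hM0 : 0 < M := lt_of_lt_of_le one_pos (le_max_left _ _)
    obtain ⟨N, hN⟩ := exists_nat_gt (Real.sqrt (2*Real.pi*M^2*Real.exp (M^2)) + 1)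
    refine ⟨max N 1, fun n hn => ⟨le_trans (le_max_right N 1) hn, ?_⟩⟩
    have hn1 : 1 ≤ n := le_trans (le_max_right N 1) hn
    obtain ⟨hbpos, hbeq⟩ := hb n hn1
    by_contra hle
    push_neg at hle
    have h1 : (n:ℝ)^2 ≤ 2*Real.pi*M^2*Real.exp (M^2) := by
      rw [← hbeq]
      have hb2 : (b n)^2 ≤ M^2 := by nlinarith
      have he := Real.exp_le_exp.mpr hb2
      have key := mul_le_mul hb2 he (Real.exp_pos _).le (by positivity : (0:ℝ) ≤ M^2)
      nlinarith [Real.pi_pos]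
    have h2 : Real.sqrt (2*Real.pi*M^2*Real.exp (M^2)) + 1 < (n:ℝ) :=
      lt_of_lt_of_le hN (Nat.cast_le.mpr (le_trans (le_max_left N 1) hn))
    have h3 : 2*Real.pi*M^2*Real.exp (M^2) < (n:ℝ)^2 := by
      have hnn : (0:ℝ) ≤ 2*Real.pi*M^2*Real.exp (M^2) := by positivity
      have hs := Real.sq_sqrt hnn
      nlinarith [Real.sqrt_nonneg (2*Real.pi*M^2*Real.exp (M^2))]
    linarith
  obtain ⟨N, hN⟩ := hblarge
  refine ⟨max C 1, lt_of_lt_of_le one_pos (le_max_right _ _), N, fun n hn => ?_⟩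
  obtain ⟨hn1, hM⟩ := hN n hn
  obtain ⟨hB, hBeq⟩ := hb n hn1
  set B : ℝ := b n with hBdef
  set s : ℝ := ((B:ℝ)^2)⁻¹ with hsdef
  have hs0 : 0 < s := by positivity
  have hB1 : 1 < B := lt_of_le_of_lt (le_max_left _ _) hM
  have hBsq : 1/δ < B^2 := by
    have h1 : Real.sqrt (1/δ) < B := lt_of_le_of_lt (le_max_right _ _) hM
    have h2 := Real.sq_sqrt (le_of_lt (by positivity : (0:ℝ) < 1/δ))
    nlinarith [Real.sqrt_nonneg (1/δ)]
  have hsδ : s < δ := by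
    have hB2 : (0:ℝ) < B^2 := by positivity
    have h1δ : (0:ℝ) < 1/δ := by positivity
    have h2 := (inv_lt_inv₀ hB2 h1δ).mpr hBsq
    simpa [one_div] using h2
  have hsε : s < ε := lt_of_lt_of_le hsδ (min_le_left _ _)
  have hstx : |t*x| * s < 1 := by
    have h1 : s < 1/(|t*x|+1) := lt_of_lt_of_le hsδ (min_le_right _ _)
    have h2 : 0 ≤ |t*x| := abs_nonneg _
    rw [lt_div_iff₀ (by positivity)] at h1
    nlinarith
  have h1v : 0 < 1 + t*x*s := by
    have h2 : -(t*x*s) ≤ |t*x| * s := by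
      calc -(t*x*s) = (-(t*x))*s := by ring
        _ ≤ |t*x| * s := mul_le_mul_of_nonneg_right (neg_le_abs _) hs0.le
    linarith
  -- positivity of c x + d
  have hcd : c n * x + d n = B ^ t * (1 + t*x*s) := by
    have hBt2 : B ^ (t-2) = B ^ t * ((B:ℝ)^2)⁻¹ := by
      rw [Real.rpow_sub hB, Real.rpow_two, div_eq_mul_inv]
    rw [hc n, hd n, ← hBdef, hBt2]
    ring
  have hcdpos : 0 < c n * x + d n := by
    rw [hcd]; exact mul_pos (Real.rpow_pos_of_pos hB t) h1v
  refine ⟨hcdpos, ?_⟩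
  have h2π : (0:ℝ) < 2*Real.pi := by positivity
  have hexp2 : Real.exp (B^2/2) * Real.exp (B^2/2) = Real.exp (B^2) := by
    rw [← Real.exp_add]; congr 1; ring
  have hnval : (n:ℝ) = Real.sqrt (2*Real.pi) * B * Real.exp (B^2/2) := by
    have hsq : (Real.sqrt (2*Real.pi) * B * Real.exp (B^2/2))^2 = (n:ℝ)^2 := by
      rw [← hBeq, mul_pow, mul_pow, Real.sq_sqrt h2π.le, sq (Real.exp (B^2/2)), hexp2]
    have hrpos : (0:ℝ) ≤ Real.sqrt (2*Real.pi) * B * Real.exp (B^2/2) := by positivity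
    rw [← Real.sqrt_sq (Nat.cast_nonneg n), ← hsq, Real.sqrt_sq hrpos]
  set v : ℝ := t*x*s with hvdef
  have hW1pos : 0 < (1+v) ^ (1/t) := Real.rpow_pos_of_pos h1v _
  have hgval : g n = B * (1+v) ^ (1/t) := by
    rw [hg n, hcd, Real.mul_rpow (Real.rpow_pos_of_pos hB t).le h1v.le]
    congr 1
    rw [← Real.rpow_mul hB.le, mul_one_div_cancel ht.ne', Real.rpow_one]
  have hgsq : (g n)^2 = B^2 * (1+v) ^ (2/t) := by
    rw [hgval, mul_pow]
    congr 1
    rw [← Real.rpow_natCast ((1+v) ^ (1/t)) 2, ← Real.rpow_mul h1v.le]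
    congr 1
    push_cast
    field_simp
  have hsB' : (1 - (1+v)^(2/t))/(2*s) = B^2/2 - B^2*(1+v)^(2/t)/2 := by
    rw [hsdef]
    field_simp [hB.ne']
  have hHeq : (n:ℝ) * Real.exp x * (stdNormalPDF (g n) / g n)
      = (1+v) ^ (-(1/t)) * Real.exp (x + (1 - (1+v) ^ (2/t)) / (2*s)) := by
    rw [stdNormalPDF, hgsq, hgval, hnval]
    rw [show x + (1 - (1+v)^(2/t))/(2*s) = x + (B^2/2 - B^2*(1+v)^(2/t)/2) from by
      rw [hsB']]
    rw [Real.rpow_neg h1v.le]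
    rw [show x + (B^2/2 - B^2*(1+v)^(2/t)/2) = B^2/2 + x + (-(B^2*(1+v)^(2/t))/2) from by
      ring]
    rw [Real.exp_add, Real.exp_add]
    rw [show -(B^2*(1+v)^(2/t))/2 = -(B^2*(1+v)^(2/t)/2) from by ring]
    have hsqrtne : Real.sqrt (2*Real.pi) ≠ 0 := by positivity
    field_simp
  have hballs := hball (show dist s 0 < ε from by
      rw [Real.dist_eq, sub_zero, abs_of_pos hs0]; exact hsε) (Set.mem_Ioi.mpr hs0)
  rw [Real.norm_eq_abs, Real.norm_eq_abs] at hballs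
  have habs : |s^3| = s^3 := abs_of_pos (by positivity)
  have hpoly : (1 + x / B^2 * ((t-2)*x/2 - 1)
      + x^2 / B^4 * ((t+1)/2 - (t-2)*(2*t+1)/6*x + (t-2)^2/8*x^2))
      = (1 + x*s*((t-2)*x/2 - 1)
        + x^2*s^2*((t+1)/2 - (t-2)*(2*t+1)/6*x + (t-2)^2/8*x^2)) := by
    rw [hsdef]
    field_simp
  rw [hHeq, hpoly]
  have hC6 : C * s^3 ≤ max C 1 / B^6 := by
    have h1 : C * s^3 ≤ max C 1 * s^3 :=
      mul_le_mul_of_nonneg_right (le_max_left _ _) (by positivity)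
    have h2 : max C 1 * s^3 = max C 1 / B^6 := by
      rw [hsdef, div_eq_mul_inv]
      congr 1
      rw [inv_pow, ← pow_mul]
    linarith
  calc |(1+v) ^ (-(1/t)) * Real.exp (x + (1 - (1+v) ^ (2/t)) / (2*s))
      - (1 + x*s*((t-2)*x/2 - 1)
        + x^2*s^2*((t+1)/2 - (t-2)*(2*t+1)/6*x + (t-2)^2/8*x^2))|
      ≤ C * |s^3| := hballs
    _ = C * s^3 := by rw [habs]
    _ ≤ max C 1 / B^6 := hC6
end

section
/- Fix α ∈ ℝ and x ∈ ℝ, and let h_n = (c_n x + d_n)^{1/2} with c_n = 2 − 2b_n^{−2} and d_n = b_n² − 2b_n^{−2}, defined for n large enough that c_n x + d_n > 0. Then as n → ∞, h_n^{α} = b_n^{α} ( 1 + α x b_n^{−2} − α b_n^{−4} (1 + x + ((2−α)/2) x²) + α(2−α) x b_n^{−6} (1 + x + ((4−α)/6) x²) + O(b_n^{−8}) ). -/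
/-!
Writing `t = b⁻²`, one has `c x + d = b² (1 + u)` with `u = 2 x t - 2 (x + 1) t² = O(t)`, so
`h^α / b^α = (1 + u) ^ (α / 2)`. Substituting `u` into the binomial series of `(1 + u) ^ (α / 2)`,
truncated after the cubic term, reproduces the stated expansion up to `O(t⁴)`. Finally
`b² exp (b²) = n² / (2π) → ∞` forces `b² → ∞`, i.e. `t → 0`.
-/

open Real Filter Topology Asymptotics

theorem tendsto_atTop_of_mul_exp_tendsto_atTop {ι : Type*} {l : Filter ι} {f : ι → ℝ}
    (hf : ∀ᶠ i in l, 0 ≤ f i) (h : Tendsto (fun i => f i * exp (f i)) l atTop) :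
    Tendsto f l atTop := by
  have hexp : Tendsto (fun i => exp (2 * f i)) l atTop := by
    refine tendsto_atTop_mono' l ?_ h
    filter_upwards [hf] with i hi
    calc f i * exp (f i) ≤ exp (f i) * exp (f i) := by
          gcongr; linarith [add_one_le_exp (f i)]
      _ = exp (2 * f i) := by rw [← exp_add, two_mul]
  simpa using (tendsto_exp_comp_atTop.mp hexp).const_mul_atTop (one_half_pos (α := ℝ))

theorem tendsto_sq_atTop_of_two_pi_mul_sq_mul_exp_sq {b : ℕ → ℝ}
    (hb : ∀ n : ℕ, 1 ≤ n → 2 * π * b n ^ 2 * exp (b n ^ 2) = (n : ℝ) ^ 2) :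
    Tendsto (fun n => b n ^ 2) atTop atTop := by
  refine tendsto_atTop_of_mul_exp_tendsto_atTop (.of_forall fun n => sq_nonneg _) ?_
  have hn2 : Tendsto (fun n : ℕ => (n : ℝ) ^ 2 / (2 * π)) atTop atTop :=
    ((tendsto_pow_atTop two_ne_zero).comp tendsto_natCast_atTop_atTop).atTop_div_const
      (by positivity)
  refine hn2.congr' ?_
  filter_upwards [eventually_ge_atTop 1] with n hn
  rw [← hb n hn]
  field_simp

theorem one_add_rpow_sub_taylor_isBigO (β : ℝ) :
    (fun u : ℝ => (1 + u) ^ β -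
      (1 + β * u + β * (β - 1) / 2 * u ^ 2 + β * (β - 1) * (β - 2) / 6 * u ^ 3))
      =O[𝓝 0] fun u => u ^ 4 := by
  have := Real.one_add_rpow_hasFPowerSeriesAt_zero (a := β) |>.isBigO_sub_partialSum_pow 4
  simp only [FormalMultilinearSeries.partialSum, Finset.sum_range_succ, binomialSeries,
    FormalMultilinearSeries.ofScalars_apply_eq, Ring.choose_eq_smul, descPochhammer_succ_right,
    Polynomial.smeval_mul, Polynomial.smeval_sub, Polynomial.smeval_X, Polynomial.smeval_natCast,
    ← norm_pow, isBigO_norm_right] at this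
  refine this.congr_left fun u => ?_
  simp [Nat.factorial]
  ring

theorem rpow_rpow_half_sq_mul_div {b s : ℝ} (hb : 0 < b) (hs : 0 ≤ s) (α : ℝ) :
    ((b ^ 2 * s) ^ (1 / 2 : ℝ)) ^ α / b ^ α = s ^ (α / 2) := by
  rw [← rpow_mul (by positivity), mul_rpow (by positivity) hs, ← rpow_natCast,
    ← rpow_mul hb.le, mul_div_right_comm, one_div_mul_eq_div]
  push_cast
  rw [mul_div_cancel₀ _ two_ne_zero, div_self (rpow_pos_of_pos hb α).ne', one_mul]

namespace PoweredNorming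

def perturbation (x t : ℝ) : ℝ := 2 * x * t - 2 * (x + 1) * t ^ 2

noncomputable def expansion (α x t : ℝ) : ℝ :=
  1 + α * x * t - α * t ^ 2 * (1 + x + (2 - α) / 2 * x ^ 2) +
    α * (2 - α) * x * t ^ 3 * (1 + x + (4 - α) / 6 * x ^ 2)

theorem tendsto_perturbation (x : ℝ) : Tendsto (perturbation x) (𝓝 0) (𝓝 0) := by
  have h : Continuous (perturbation x) := by unfold perturbation; fun_prop
  simpa [perturbation] using h.tendsto 0

theorem perturbation_isBigO (x : ℝ) : perturbation x =O[𝓝 0] id :=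
  ((isBigO_refl id _).const_mul_left (2 * x)).sub
    ((isLittleO_pow_id one_lt_two).isBigO.const_mul_left (2 * (x + 1)))

theorem rpow_one_add_perturbation_sub_expansion_isBigO (α x : ℝ) :
    (fun t => (1 + perturbation x t) ^ (α / 2) - expansion α x t) =O[𝓝 0] fun t => t ^ 4 := by
  set β := α / 2
  have htaylor := ((one_add_rpow_sub_taylor_isBigO β).comp_tendsto (tendsto_perturbation x)).trans
    ((perturbation_isBigO x).pow 4)
  -- the cubic Taylor polynomial of `(1 + u) ^ β` at `u = perturbation x t` differs from
  -- `expansion α x t` by `t ^ 4` times the following quadratic in `t`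
  set A := β * (β - 1) / 2
  set B := β * (β - 1) * (β - 2) / 6
  set Q : ℝ → ℝ := fun t => 4 * A * (x + 1) ^ 2 - 24 * B * x ^ 2 * (x + 1) +
      24 * B * x * (x + 1) ^ 2 * t - 8 * B * (x + 1) ^ 3 * t ^ 2 with hQ
  have hQ : Continuous Q := by rw [hQ]; fun_prop
  have hrest := (isBigO_refl (fun t : ℝ => t ^ 4) _).mul ((hQ.tendsto 0).isBigO_one ℝ)
  simp only [id, mul_one] at htaylor hrest
  refine (htaylor.add hrest).congr_left fun t => ?_
  simp only [Function.comp_apply, perturbation, expansion, Q, β, A, B]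
  ring

theorem mul_add_eq_sq_mul_one_add_perturbation {b : ℝ} (hb : b ≠ 0) (x : ℝ) :
    (2 - 2 / b ^ 2) * x + (b ^ 2 - 2 / b ^ 2) = b ^ 2 * (1 + perturbation x (b ^ 2)⁻¹) := by
  unfold perturbation
  field_simp
  ring

theorem expansion_inv_sq (α x b : ℝ) :
    expansion α x (b ^ 2)⁻¹ = 1 + α * x / b ^ 2 - α / b ^ 4 * (1 + x + (2 - α) / 2 * x ^ 2) +
      α * (2 - α) * x / b ^ 6 * (1 + x + (4 - α) / 6 * x ^ 2) := by
  unfold expansion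
  ring

end PoweredNorming

open PoweredNorming in
/-- With `b_n` the unique positive solution of `2π b_n² exp(b_n²) = n²`,
`c_n = 2 − 2b_n^{−2}`, `d_n = b_n² − 2b_n^{−2}` and `h_n = (c_n x + d_n)^{1/2}`:
for fixed `α, x ∈ ℝ`,
`h_n^α = b_n^α (1 + αx b_n^{−2} − α b_n^{−4}(1 + x + ((2−α)/2)x²)
  + α(2−α)x b_n^{−6}(1 + x + ((4−α)/6)x²) + O(b_n^{−8}))`. -/
theorem powered_norming_rpow_expansion_t_eq_two
    (b : ℕ → ℝ)
    (hb : ∀ n : ℕ, 1 ≤ n → 0 < b n ∧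
      2 * Real.pi * (b n) ^ 2 * Real.exp ((b n) ^ 2) = (n : ℝ) ^ 2)
    (α x : ℝ)
    (c d h : ℕ → ℝ)
    (hc : ∀ n : ℕ, c n = 2 - 2 / (b n) ^ 2)
    (hd : ∀ n : ℕ, d n = (b n) ^ 2 - 2 / (b n) ^ 2)
    (hh : ∀ n : ℕ, h n = (c n * x + d n) ^ ((1 : ℝ) / 2)) :
    ∃ C > (0 : ℝ), ∃ N : ℕ, ∀ n : ℕ, N ≤ n →
      0 < c n * x + d n ∧
      |h n ^ α / b n ^ α -
        (1 + α * x / (b n) ^ 2 -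
          α / (b n) ^ 4 * (1 + x + (2 - α) / 2 * x ^ 2) +
          α * (2 - α) * x / (b n) ^ 6 * (1 + x + (4 - α) / 6 * x ^ 2))|
      ≤ C / (b n) ^ 8 := by
  have ht : Tendsto (fun n => (b n ^ 2)⁻¹) atTop (𝓝 0) :=
    (tendsto_sq_atTop_of_two_pi_mul_sq_mul_exp_sq fun n hn => (hb n hn).2).inv_tendsto_atTop
  obtain ⟨C, hC, hCbound⟩ :=
    ((rpow_one_add_perturbation_sub_expansion_isBigO α x).comp_tendsto ht).exists_pos
  have hu : ∀ᶠ n in atTop, 0 < 1 + perturbation x (b n ^ 2)⁻¹ := by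
    have h1 := ((tendsto_perturbation x).const_add 1).comp ht
    exact h1.eventually (lt_mem_nhds (by norm_num))
  obtain ⟨N, hN⟩ := eventually_atTop.1 (hCbound.bound.and (hu.and (eventually_ge_atTop 1)))
  refine ⟨C, hC, N, fun n hn => ?_⟩
  obtain ⟨hbound, hpos, hn1⟩ := hN n hn
  have hbn := (hb n hn1).1
  have hs : c n * x + d n = b n ^ 2 * (1 + perturbation x (b n ^ 2)⁻¹) := by
    rw [hc, hd]; exact mul_add_eq_sq_mul_one_add_perturbation hbn.ne' x
  refine ⟨by rw [hs]; positivity, ?_⟩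
  rw [hh, hs, rpow_rpow_half_sq_mul_div hbn hpos.le, ← expansion_inv_sq]
  simpa [div_eq_mul_inv, ← pow_mul, abs_of_pos hbn] using hbound
end

section
/- Fix x ∈ ℝ and let h_n = (c_n x + d_n)^{1/2} with c_n = 2 − 2b_n^{−2} and d_n = b_n² − 2b_n^{−2}, defined for n large enough that c_n x + d_n > 0. Then as n → ∞, φ(h_n)/h_n = n^{−1} e^{−x} ( 1 + b_n^{−2} + b_n^{−4} (x² + x + 3/2) − b_n^{−6} ((4/3) x³ + x² + x − 7/6) + O(b_n^{−8}) ). -/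
set_option maxHeartbeats 1000000


open Real Filter Topology

lemma key_expansion (x : ℝ) : ∃ C > (0:ℝ), ∃ δ > (0:ℝ), ∀ t : ℝ, 0 < t → t < δ →
    0 < 1 + (2*x*t - (2*x+2)*t^2) ∧
    |Real.exp ((x+1)*t) / Real.sqrt (1 + (2*x*t - (2*x+2)*t^2)) -
      (1 + t + (x^2+x+3/2)*t^2 - (4/3*x^3+x^2+x-7/6)*t^3)| ≤ C * t^4 := by
  set r0 : ℝ := -(41/12 + x/3 + 6*x^2 + 14/3*x^3 + 13/3*x^4) with hr0
  set r1 : ℝ := -(43/6 + 13/6*x + 2/3*x^2 - 4/3*x^3 + 2/3*x^4 + 2/3*x^5) with hr1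
  set r2 : ℝ := -(281/36 + 13/2*x + 26/3*x^2 + 82/9*x^3 + 13*x^4 + 26/3*x^5 + 32/9*x^6) with hr2
  set r3 : ℝ := -7 - 53/18*x + 2*x^2 + 56/3*x^3 + 208/9*x^4 + 22*x^5 + 32/3*x^6 + 32/9*x^7 with hr3
  set r4 : ℝ := -49/18 + 35/18*x + 22/3*x^2 + 44/9*x^3 - 46/9*x^4 - 38/3*x^5 - 80/9*x^6 - 32/9*x^7 with hr4
  set M : ℝ := |r0| + |r1| + |r2| + |r3| + |r4| with hM
  have hM0 : 0 ≤ M := by positivity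
  clear_value r0 r1 r2 r3 r4
  set a2 : ℝ := x^2 + x + 3/2 with ha2
  set a3 : ℝ := 4/3*x^3 + x^2 + x - 7/6 with ha3
  clear_value M a2 a3
  refine ⟨4*(16*(x+1)^4 + M) + 1, by nlinarith [hM0, sq_nonneg ((x+1)^2)],
    min 1 (min (1/(8*|x|+4)) (min (1/(2*(1+|a2|+|a3|))) (1/(2*|x+1|+1)))), by positivity, ?_⟩
  intro t ht htδ
  have ht1 : t ≤ 1 := le_trans htδ.le (min_le_left _ _)
  have htA : (8*|x|+4) * t ≤ 1 := by
    have h1 : t ≤ 1/(8*|x|+4) :=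
      le_trans htδ.le (le_trans (min_le_right _ _) (min_le_left _ _))
    have h2 : (0:ℝ) < 8*|x|+4 := by positivity
    rw [le_div_iff₀ h2] at h1; linarith
  have htB : (2*(1+|a2|+|a3|)) * t ≤ 1 := by
    have h1 : t ≤ 1/(2*(1+|a2|+|a3|)) :=
      le_trans htδ.le (le_trans (min_le_right _ _) (le_trans (min_le_right _ _) (min_le_left _ _)))
    have h2 : (0:ℝ) < 2*(1+|a2|+|a3|) := by positivity
    rw [le_div_iff₀ h2] at h1; linarith
  have htC : (2*|x+1|+1) * t ≤ 1 := by
    have h1 : t ≤ 1/(2*|x+1|+1) :=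
      le_trans htδ.le (le_trans (min_le_right _ _) (le_trans (min_le_right _ _) (min_le_right _ _)))
    have h2 : (0:ℝ) < 2*|x+1|+1 := by positivity
    rw [le_div_iff₀ h2] at h1; linarith
  set u : ℝ := 2*x*t - (2*x+2)*t^2 with hu_def
  clear_value u
  have hxabs := abs_nonneg x
  have hx1 := le_abs_self x
  have hx2 := neg_abs_le x
  have hu : |u| ≤ 1/2 := by
    have ht2le' : t^2 ≤ t := by nlinarith
    have g1 : |x| * t^2 ≤ |x| * t := mul_le_mul_of_nonneg_left ht2le' (abs_nonneg x)
    have g2 : x*t ≤ |x| * t := mul_le_mul_of_nonneg_right hx1 ht.le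
    have g3 : -(|x| * t) ≤ x*t := by linarith [mul_le_mul_of_nonneg_right hx2 ht.le]
    have g4 : x*t^2 ≤ |x| * t^2 := mul_le_mul_of_nonneg_right hx1 (sq_nonneg t)
    have g5 : -(|x| * t^2) ≤ x*t^2 := by linarith [mul_le_mul_of_nonneg_right hx2 (sq_nonneg t)]
    rw [abs_le]
    constructor
    · rw [hu_def]; linarith [g1, g2, g3, g4, g5, htA, sq_nonneg t, ht2le']
    · rw [hu_def]; linarith [g1, g2, g3, g4, g5, htA, sq_nonneg t, ht2le']
  have huab := abs_le.mp hu
  have hvpos : (0:ℝ) < 1 + u := by linarith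
  have hv2 : (1:ℝ)/2 ≤ 1 + u := by linarith
  refine ⟨hvpos, ?_⟩
  set P : ℝ := 1 + t + a2*t^2 - a3*t^3 with hP_def
  clear_value P
  have ht2le : t^2 ≤ t := by
    linarith [mul_le_mul_of_nonneg_left ht1 ht.le]
  have ht3le : t^3 ≤ t := by
    linarith [mul_le_mul_of_nonneg_right ht2le ht.le, mul_le_mul_of_nonneg_left ht1 ht.le,
      mul_le_mul_of_nonneg_left ht2le ht.le]
  have hPhalf : (1:ℝ)/2 ≤ P := by
    have h2 := mul_le_mul_of_nonneg_right (neg_abs_le a2) (sq_nonneg t)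
    have h3 : a3 * t^3 ≤ |a3| * t^3 := mul_le_mul_of_nonneg_right (le_abs_self a3) (by positivity)
    have h4 : |a2| * t^2 ≤ |a2| * t := mul_le_mul_of_nonneg_left ht2le (abs_nonneg a2)
    have h5 : |a3| * t^3 ≤ |a3| * t := mul_le_mul_of_nonneg_left ht3le (abs_nonneg a3)
    rw [hP_def]; linarith [h2, h3, h4, h5, htB]
  -- sqrt facts
  have hsv2 : Real.sqrt (1+u) ^ 2 = 1 + u := Real.sq_sqrt hvpos.le
  have hsvpos : 0 < Real.sqrt (1+u) := Real.sqrt_pos.mpr hvpos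
  set G : ℝ := Real.exp ((x+1)*t) / Real.sqrt (1+u) with hG_def
  clear_value G
  have hGpos : 0 < G := by rw [hG_def]; positivity
  set y : ℝ := 2*(x+1)*t with hy_def
  clear_value y
  have hG2 : G^2 = Real.exp y / (1+u) := by
    rw [hG_def, div_pow, hsv2, sq, ← Real.exp_add, hy_def]
    ring_nf
  have hy1 : |y| ≤ 1 := by
    have hya : |y| = 2 * |x+1| * t := by
      rw [hy_def, abs_mul, abs_mul, abs_two, abs_of_pos ht]
    rw [hya]; linarith [htC, ht.le]
  have hb4 := Real.exp_bound hy1 (show 0 < 4 by norm_num)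
  have hsum : ∑ m ∈ Finset.range 4, y ^ m / (m.factorial : ℝ)
      = 1 + y + y^2/2 + y^3/6 := by
    simp [Finset.sum_range_succ, Nat.factorial]
  rw [hsum] at hb4
  have hy4 : |y|^4 = 16*(x+1)^4*t^4 := by
    rw [← abs_pow, abs_of_nonneg (by positivity), hy_def]; ring
  have hexpT : |Real.exp y - (1 + y + y^2/2 + y^3/6)| ≤ 16*(x+1)^4*t^4 := by
    have : |y|^4 * ((4+1 : ℕ) / ((Nat.factorial 4 : ℝ) * 4)) ≤ |y|^4 := by
      have hone : ((4+1 : ℕ) : ℝ) / ((Nat.factorial 4 : ℝ) * 4) ≤ 1 := by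
        norm_num [Nat.factorial]
      exact le_trans (mul_le_mul_of_nonneg_left hone (pow_nonneg (abs_nonneg y) 4))
        (le_of_eq (mul_one _))
    calc |Real.exp y - (1 + y + y^2/2 + y^3/6)|
        ≤ |y|^4 * ((4+1 : ℕ) / ((Nat.factorial 4 : ℝ) * 4)) := by
          convert hb4 using 3 <;> norm_num
      _ ≤ |y|^4 := this
      _ = 16*(x+1)^4*t^4 := hy4
  have hring : P^2*(1+u) - (1 + y + y^2/2 + y^3/6)
      = t^4*(r0 + r1*t + r2*t^2 + r3*t^3 + r4*t^4) := by
    rw [hP_def, ha2, ha3, hu_def, hy_def, hr0, hr1, hr2, hr3, hr4]; ring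
  have hRbound : |r0 + r1*t + r2*t^2 + r3*t^3 + r4*t^4| ≤ M := by
    have p2 : t^2 ≤ 1 := pow_le_one₀ ht.le ht1
    have p3 : t^3 ≤ 1 := pow_le_one₀ ht.le ht1
    have p4 : t^4 ≤ 1 := pow_le_one₀ ht.le ht1
    have e1 : |r1*t| ≤ |r1| := by
      rw [abs_mul, abs_of_pos ht]
      linarith [mul_le_mul_of_nonneg_left ht1 (abs_nonneg r1)]
    have e2 : |r2*t^2| ≤ |r2| := by
      rw [abs_mul, abs_of_pos (show (0:ℝ) < t^2 by positivity)]
      linarith [mul_le_mul_of_nonneg_left p2 (abs_nonneg r2)]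
    have e3 : |r3*t^3| ≤ |r3| := by
      rw [abs_mul, abs_of_pos (show (0:ℝ) < t^3 by positivity)]
      linarith [mul_le_mul_of_nonneg_left p3 (abs_nonneg r3)]
    have e4 : |r4*t^4| ≤ |r4| := by
      rw [abs_mul, abs_of_pos (show (0:ℝ) < t^4 by positivity)]
      linarith [mul_le_mul_of_nonneg_left p4 (abs_nonneg r4)]
    calc |r0 + r1*t + r2*t^2 + r3*t^3 + r4*t^4|
        ≤ |r0 + r1*t + r2*t^2 + r3*t^3| + |r4*t^4| := abs_add_le _ _
      _ ≤ |r0 + r1*t + r2*t^2| + |r3*t^3| + |r4*t^4| := by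
          linarith [abs_add_le (r0 + r1*t + r2*t^2) (r3*t^3)]
      _ ≤ |r0 + r1*t| + |r2*t^2| + |r3*t^3| + |r4*t^4| := by
          linarith [abs_add_le (r0 + r1*t) (r2*t^2)]
      _ ≤ |r0| + |r1*t| + |r2*t^2| + |r3*t^3| + |r4*t^4| := by
          linarith [abs_add_le r0 (r1*t)]
      _ ≤ M := by rw [hM]; linarith
  have hstep1 : |Real.exp y - P^2*(1+u)| ≤ (16*(x+1)^4 + M) * t^4 := by
    have h1 : |P^2*(1+u) - (1 + y + y^2/2 + y^3/6)| ≤ M * t^4 := by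
      rw [hring, abs_mul, abs_of_pos (show (0:ℝ) < t^4 by positivity)]
      linarith [mul_le_mul_of_nonneg_left hRbound (pow_pos ht 4).le]
    calc |Real.exp y - P^2*(1+u)|
        = |(Real.exp y - (1 + y + y^2/2 + y^3/6)) - (P^2*(1+u) - (1 + y + y^2/2 + y^3/6))| := by
          ring_nf
      _ ≤ |Real.exp y - (1 + y + y^2/2 + y^3/6)| + |P^2*(1+u) - (1 + y + y^2/2 + y^3/6)| :=
          abs_sub _ _
      _ ≤ 16*(x+1)^4*t^4 + M * t^4 := by linarith
      _ = (16*(x+1)^4 + M) * t^4 := by ring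
  have hstep2 : |G^2 - P^2| ≤ 2*(16*(x+1)^4 + M) * t^4 := by
    have hGP2 : G^2 - P^2 = (Real.exp y - P^2*(1+u)) / (1+u) := by
      rw [hG2]; field_simp
    have hx4 : (0:ℝ) ≤ (x+1)^4 := by positivity
    have hK : (0:ℝ) ≤ (16*(x+1)^4 + M) * t^4 :=
      mul_nonneg (by linarith) (by positivity)
    rw [hGP2, abs_div, abs_of_pos hvpos, div_le_iff₀ hvpos]
    linarith [hstep1, mul_le_mul_of_nonneg_left hv2 hK]
  have hfac : |G - P| * (G + P) = |G^2 - P^2| := by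
    rw [← abs_of_pos (show 0 < G + P by linarith), ← abs_mul]
    congr 1; ring
  have hGP : |G - P| ≤ 4*(16*(x+1)^4 + M) * t^4 := by
    have h1 : (1:ℝ)/2 ≤ G + P := by linarith
    have h2 := mul_le_mul_of_nonneg_left h1 (abs_nonneg (G - P))
    linarith [hfac, hstep2, h2]
  calc |G - P| ≤ 4*(16*(x+1)^4 + M) * t^4 := hGP
    _ ≤ (4*(16*(x+1)^4 + M) + 1) * t^4 := by linarith [(pow_pos ht 4).le]

/-- With `b_n` the unique positive solution of `2π b_n² exp(b_n²) = n²`,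
`c_n = 2 − 2b_n^{−2}`, `d_n = b_n² − 2b_n^{−2}` and `h_n = (c_n x + d_n)^{1/2}`:
`φ(h_n)/h_n = n⁻¹ e^{−x} (1 + b_n^{−2} + b_n^{−4}(x² + x + 3/2)
  − b_n^{−6}((4/3)x³ + x² + x − 7/6) + O(b_n^{−8}))`. -/
theorem powered_extremes_density_ratio_expansion_t_eq_two
    (b : ℕ → ℝ)
    (hb : ∀ n : ℕ, 1 ≤ n → 0 < b n ∧
      2 * Real.pi * (b n) ^ 2 * Real.exp ((b n) ^ 2) = (n : ℝ) ^ 2)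
    (x : ℝ)
    (c d h : ℕ → ℝ)
    (hc : ∀ n : ℕ, c n = 2 - 2 / (b n) ^ 2)
    (hd : ∀ n : ℕ, d n = (b n) ^ 2 - 2 / (b n) ^ 2)
    (hh : ∀ n : ℕ, h n = (c n * x + d n) ^ ((1 : ℝ) / 2)) :
    ∃ C > (0 : ℝ), ∃ N : ℕ, ∀ n : ℕ, N ≤ n →
      0 < c n * x + d n ∧
      |(n : ℝ) * Real.exp x * (stdNormalPDF (h n) / h n) -
        (1 + 1 / (b n) ^ 2 + (x ^ 2 + x + 3 / 2) / (b n) ^ 4 -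
          (4 / 3 * x ^ 3 + x ^ 2 + x - 7 / 6) / (b n) ^ 6)|
      ≤ C / (b n) ^ 8 := by
  obtain ⟨C, hC, δ, hδ, hkey⟩ := key_expansion x
  -- B : threshold for b n
  set B : ℝ := max 1 (Real.sqrt (1/δ)) with hB
  have hB1 : (1:ℝ) ≤ B := le_max_left _ _
  have hBpos : (0:ℝ) < B := by linarith
  obtain ⟨N, hN⟩ := exists_nat_ge (2 * Real.pi * B ^ 2 * Real.exp (B ^ 2) + 1)
  have hπ : (0:ℝ) < Real.pi := Real.pi_pos
  have hNbound : (0:ℝ) < 2 * Real.pi * B ^ 2 * Real.exp (B ^ 2) := by positivity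
  refine ⟨C, hC, N, ?_⟩
  intro n hn
  have hn1 : 1 ≤ n := by
    by_contra hcon
    push_neg at hcon
    interval_cases n
    · simp at hn
      rw [hn] at hN
      simp at hN
      linarith
  obtain ⟨hbpos, hbeq⟩ := hb n hn1
  have hnR : (1:ℝ) ≤ (n:ℝ) := by exact_mod_cast hn1
  have hnN : ((N:ℝ)) ≤ (n:ℝ) := by exact_mod_cast hn
  -- b n > B
  have hbB : B < b n := by
    by_contra hcon
    push_neg at hcon
    have hmono : 2 * Real.pi * (b n) ^ 2 * Real.exp ((b n) ^ 2) ≤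
        2 * Real.pi * B ^ 2 * Real.exp (B ^ 2) := by
      have h1 : (b n)^2 ≤ B^2 := by nlinarith
      have h2 : Real.exp ((b n)^2) ≤ Real.exp (B^2) := Real.exp_le_exp.mpr h1
      have h3 : (0:ℝ) < Real.exp ((b n)^2) := Real.exp_pos _
      have h4 : (b n)^2 * Real.exp ((b n)^2) ≤ B^2 * Real.exp (B^2) :=
        mul_le_mul h1 h2 h3.le (by positivity)
      linarith [mul_le_mul_of_nonneg_left h4 hπ.le]
    rw [hbeq] at hmono
    nlinarith
  set t : ℝ := 1 / (b n) ^ 2 with ht_def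
  have hbne : b n ≠ 0 := ne_of_gt hbpos
  have htpos : 0 < t := by rw [ht_def]; positivity
  -- t < δ
  have htδ : t < δ := by
    have hs : Real.sqrt (1/δ) < b n := lt_of_le_of_lt (le_max_right _ _) hbB
    have hs0 : (0:ℝ) ≤ Real.sqrt (1/δ) := Real.sqrt_nonneg _
    have hsq : 1/δ < (b n)^2 := by
      calc 1/δ = Real.sqrt (1/δ) ^ 2 := (Real.sq_sqrt (by positivity)).symm
        _ < (b n)^2 := by nlinarith
    rw [ht_def, div_lt_iff₀ (by positivity)]
    rw [div_lt_iff₀ hδ] at hsq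
    linarith [hsq]
  obtain ⟨hupos, hbound⟩ := hkey t htpos htδ
  -- c n * x + d n = b² (1 + u)
  have hcd : c n * x + d n = (b n)^2 * (1 + (2*x*t - (2*x+2)*t^2)) := by
    rw [hc, hd, ht_def]
    field_simp
    ring
  have hcdpos : 0 < c n * x + d n := by
    rw [hcd]
    exact mul_pos (by positivity) hupos
  refine ⟨hcdpos, ?_⟩
  -- n = √(2π) b e^{b²/2}
  have h2π : (0:ℝ) < 2 * Real.pi := by positivity
  have hneq : (n:ℝ) = Real.sqrt (2*Real.pi) * b n * Real.exp ((b n)^2/2) := by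
    have hsq : ((n:ℝ))^2 = (Real.sqrt (2*Real.pi) * b n * Real.exp ((b n)^2/2))^2 := by
      rw [← hbeq, mul_pow, mul_pow, Real.sq_sqrt h2π.le, sq (Real.exp _), ← Real.exp_add,
        show (b n)^2/2 + (b n)^2/2 = (b n)^2 by ring]
    have h1 : (0:ℝ) ≤ (n:ℝ) := by positivity
    have h2 : (0:ℝ) ≤ Real.sqrt (2*Real.pi) * b n * Real.exp ((b n)^2/2) := by positivity
    calc (n:ℝ) = Real.sqrt ((n:ℝ)^2) := (Real.sqrt_sq h1).symm
      _ = Real.sqrt ((Real.sqrt (2*Real.pi) * b n * Real.exp ((b n)^2/2))^2) := by rw [hsq]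
      _ = Real.sqrt (2*Real.pi) * b n * Real.exp ((b n)^2/2) := Real.sqrt_sq h2
  -- h n = b n * sqrt(1+u)
  have hhn : h n = b n * Real.sqrt (1 + (2*x*t - (2*x+2)*t^2)) := by
    rw [hh, ← Real.sqrt_eq_rpow, hcd, Real.sqrt_mul (by positivity), Real.sqrt_sq hbpos.le]
  have hh2 : (h n)^2 = c n * x + d n := by
    rw [hh, ← Real.sqrt_eq_rpow, Real.sq_sqrt hcdpos.le]
  -- main value identity
  have hexpid : Real.exp ((b n)^2/2) * Real.exp x * Real.exp (-(c n * x + d n)/2)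
      = Real.exp ((x+1)*t) := by
    rw [← Real.exp_add, ← Real.exp_add]
    congr 1
    rw [hc, hd, ht_def]
    field_simp
    ring
  have hsvpos : 0 < Real.sqrt (1 + (2*x*t - (2*x+2)*t^2)) := Real.sqrt_pos.mpr hupos
  have hsπpos : 0 < Real.sqrt (2*Real.pi) := Real.sqrt_pos.mpr h2π
  have hval : (n:ℝ) * Real.exp x * (stdNormalPDF (h n) / h n)
      = Real.exp ((x+1)*t) / Real.sqrt (1 + (2*x*t - (2*x+2)*t^2)) := by
    rw [hneq, stdNormalPDF, hh2, hhn, ← hexpid]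
    rw [neg_div]
    field_simp
  -- polynomial identity
  have hpoly : 1 + 1 / (b n) ^ 2 + (x ^ 2 + x + 3 / 2) / (b n) ^ 4 -
      (4 / 3 * x ^ 3 + x ^ 2 + x - 7 / 6) / (b n) ^ 6
      = 1 + t + (x^2+x+3/2)*t^2 - (4/3*x^3+x^2+x-7/6)*t^3 := by
    rw [ht_def]
    field_simp
  have hCt : C * t^4 = C / (b n)^8 := by
    rw [ht_def, div_pow, one_pow, ← pow_mul, mul_one_div]
  rw [hval, hpoly, ← hCt]
  exact hbound
end
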